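/- arXiv:2407.10893 — 2 statements merged into one kernel-verified Lean document; each statement's English description precedes it below -/
import Mathlib

section
/- Let α > 1 and β > 1 be real constants, and for L > 0 define g(L) = inf_{n ∈ ℕ, n ≥ 1} α^n β^{L/2^n}. Then g(L) is not O((L/log L)^{log₂ α}) as L → ∞; that is, there is no constant M such that g(L) ≤ M (L/log L)^{log₂ α} for all sufficiently large L. -/
/-!
Write `γ = log₂ α`, so that `α ^ n = (2 ^ n) ^ γ`. From `t ≤ exp t` one gets
`(c s) ^ γ ≤ β ^ s` for all `s ≥ 0`, with `c = log β / γ`; applied to `s = L / 2 ^ n` this gives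
`(c L) ^ γ = (2 ^ n) ^ γ (c L / 2 ^ n) ^ γ ≤ α ^ n β ^ (L / 2 ^ n)` for every `n`, hence
`g(L) ≥ (c L) ^ γ`. A bound `g(L) ≤ M (L / log L) ^ γ` would then force `(c log L) ^ γ ≤ M`,
which fails for large `L`.
-/

open Real Filter

lemma pow_rpow_logb {b a : ℝ} (hb : 0 < b) (hb₁ : b ≠ 1) (ha : 0 < a) (n : ℕ) :
    (b ^ n) ^ logb b a = a ^ n := by
  rw [← rpow_natCast_mul hb.le, mul_comm, rpow_mul_natCast hb.le, rpow_logb hb hb₁ ha]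

lemma log_div_mul_rpow_le_rpow {β γ s : ℝ} (hβ : 1 < β) (hγ : 0 < γ) (hs : 0 ≤ s) :
    (log β / γ * s) ^ γ ≤ β ^ s := by
  have ht : 0 ≤ log β / γ * s := by have := log_pos hβ; positivity
  calc (log β / γ * s) ^ γ ≤ exp (log β / γ * s) ^ γ :=
        rpow_le_rpow ht (by linarith [add_one_le_exp (log β / γ * s)]) hγ.le
    _ = β ^ s := by
        rw [← exp_mul, rpow_def_of_pos (by linarith)]
        field_simp

lemma log_div_mul_rpow_le_rpow_mul_rpow_div {β γ x L : ℝ} (hβ : 1 < β) (hγ : 0 < γ)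
    (hx : 0 < x) (hL : 0 ≤ L) :
    (log β / γ * L) ^ γ ≤ x ^ γ * β ^ (L / x) := by
  have hc : 0 ≤ log β / γ := by have := log_pos hβ; positivity
  calc (log β / γ * L) ^ γ = x ^ γ * (log β / γ * (L / x)) ^ γ := by
        rw [← mul_rpow hx.le (by positivity)]
        field_simp
    _ ≤ x ^ γ * β ^ (L / x) := by
        gcongr
        exact log_div_mul_rpow_le_rpow hβ hγ (by positivity)

lemma log_div_mul_rpow_le_iInf {α β L : ℝ} (hα : 1 < α) (hβ : 1 < β) (hL : 0 ≤ L) :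
    (log β / logb 2 α * L) ^ logb 2 α ≤ ⨅ n : ℕ+, α ^ (n : ℕ) * β ^ (L / 2 ^ (n : ℕ)) := by
  refine le_ciInf fun n => ?_
  rw [← pow_rpow_logb two_pos (by norm_num) (by linarith) n]
  exact log_div_mul_rpow_le_rpow_mul_rpow_div hβ (logb_pos one_lt_two hα) (by positivity) hL

/-- For `α, β > 1`, the quantity `g(L) = inf_{n ≥ 1} α^n β^{L/2^n}` is not
`O((L/log L)^{log₂ α})` as `L → ∞`. -/
theorem stmt9 (α β : ℝ) (hα : 1 < α) (hβ : 1 < β) :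
    ¬ ∃ M : ℝ, ∀ᶠ L : ℝ in Filter.atTop,
        (⨅ n : ℕ+, α ^ (n : ℕ) * β ^ (L / 2 ^ (n : ℕ))) ≤
          M * (L / Real.log L) ^ Real.logb 2 α := by
  rintro ⟨M, hM⟩
  set γ := logb 2 α
  set c := log β / γ
  have hγ : 0 < γ := logb_pos one_lt_two hα
  have hc : 0 < c := div_pos (log_pos hβ) hγ
  have hgrowth : Tendsto (fun L => (c * log L) ^ γ) atTop atTop :=
    (tendsto_rpow_atTop hγ).comp (tendsto_log_atTop.const_mul_atTop hc)
  obtain ⟨L, hLM, hL, hML⟩ :=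
    (hM.and ((eventually_gt_atTop 1).and (hgrowth.eventually_gt_atTop M))).exists
  have hlog : 0 < log L := log_pos hL
  have hratio : 0 < (L / log L) ^ γ := rpow_pos_of_pos (by positivity) γ
  have hsplit : (c * L) ^ γ = (c * log L) ^ γ * (L / log L) ^ γ := by
    rw [← mul_rpow (by positivity) (by positivity)]
    field_simp
  have hbound := (log_div_mul_rpow_le_iInf hα hβ (by linarith)).trans hLM
  rw [hsplit] at hbound
  exact hML.not_ge (le_of_mul_le_mul_right hbound hratio)
end

section
/- Let c', L_u, η > 0 be constants with P_g(L_u) := η e^{-L_u/L_att} > 0, and for total distance L > 0 choose m + 1 = ⌈L/L_u⌉ segments. Then T_second(m) = (L/c') · H(m+1) / ((m+1) P_g(L/(m+1))) satisfies T_second(m) ≤ (L_u/c') · H(⌈L/L_u⌉) / P_g(L_u), and consequently min_m T_second(m) = O(log L) as L → ∞ (taking P_s = 1). -/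
open Asymptotics

/-- With `P_g(x) = η e^{-x/L_att}` and `m + 1 = ⌈L/L_u⌉` segments, the distribution time
`T_second(m) = (L/c') H(m+1)/((m+1) P_g(L/(m+1)))` is bounded by
`(L_u/c') H(⌈L/L_u⌉)/P_g(L_u)`, hence `min_m T_second(m) = O(log L)`. -/
theorem stmt13 (c' Lu η Latt : ℝ) (hc : 0 < c') (hLu : 0 < Lu) (hη : 0 < η)
    (hLatt : 0 < Latt)
    (Pg : ℝ → ℝ) (hPgdef : ∀ x : ℝ, Pg x = η * Real.exp (-x / Latt))
    (hPgLu : 0 < Pg Lu)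
    (H : ℕ → ℝ) (hH : ∀ n : ℕ, H n = ∑ k ∈ Finset.Icc 1 n, (1 : ℝ) / k)
    (Tsec : ℝ → ℕ → ℝ)
    (hT : ∀ (L : ℝ) (m : ℕ),
      Tsec L m = (L / c') * H (m + 1) / (((m : ℝ) + 1) * Pg (L / ((m : ℝ) + 1)))) :
    (∀ L : ℝ, 0 < L → ∀ m : ℕ, m + 1 = ⌈L / Lu⌉₊ →
      Tsec L m ≤ (Lu / c') * H ⌈L / Lu⌉₊ / Pg Lu) ∧
    (fun L : ℝ => ⨅ m : ℕ+, Tsec L (m : ℕ)) =O[Filter.atTop] Real.log := by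
  have hHharm : ∀ n : ℕ, H n = (harmonic n : ℝ) := by
    intro n
    rw [hH, harmonic_eq_sum_Icc]
    push_cast
    exact Finset.sum_congr rfl fun k _ => one_div _
  have hHnn : ∀ n : ℕ, 0 ≤ H n := by
    intro n; rw [hH]; positivity
  have hPgpos : ∀ x : ℝ, 0 < Pg x := by
    intro x; rw [hPgdef]; positivity
  have hPgmono : ∀ x y : ℝ, x ≤ y → Pg y ≤ Pg x := by
    intro x y hxy
    rw [hPgdef, hPgdef]
    have h : -y / Latt ≤ -x / Latt := by gcongr
    exact mul_le_mul_of_nonneg_left (Real.exp_le_exp.mpr h) hη.le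
  -- key bound
  have key : ∀ L : ℝ, 0 < L → ∀ m : ℕ, m + 1 = ⌈L / Lu⌉₊ →
      Tsec L m ≤ (Lu / c') * H ⌈L / Lu⌉₊ / Pg Lu := by
    intro L hL m hm
    rw [hT, hm]
    set n : ℕ := ⌈L / Lu⌉₊ with hn
    have hmn : (m : ℝ) + 1 = (n : ℝ) := by exact_mod_cast congrArg (Nat.cast (R := ℝ)) hm
    rw [hmn]
    have hnpos : 0 < n := by
      rw [hn]; exact Nat.ceil_pos.mpr (div_pos hL hLu)
    have hnR : (0 : ℝ) < n := by exact_mod_cast hnpos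
    have hLn : L / n ≤ Lu := by
      rw [div_le_iff₀ hnR]
      have hceil : L / Lu ≤ (n : ℝ) := Nat.le_ceil _
      have hdm : L = (L / Lu) * Lu := (div_mul_cancel₀ L hLu.ne').symm
      nlinarith [mul_le_mul_of_nonneg_right hceil hLu.le]
    have hp : Pg Lu ≤ Pg (L / n) := hPgmono _ _ hLn
    have hppos : 0 < Pg (L / n) := hPgpos _
    rw [div_le_div_iff₀ (by positivity) hPgLu]
    have hLle : L ≤ n * Lu := by
      rw [div_le_iff₀ hnR] at hLn; linarith [hLn]
    have ha := hHnn n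
    have hX : L * H n * Pg Lu ≤ Lu * H n * (n * Pg (L / n)) := by
      nlinarith [mul_le_mul_of_nonneg_right hLle (mul_nonneg ha hPgLu.le),
        mul_le_mul_of_nonneg_left hp (mul_nonneg (mul_nonneg hnR.le hLu.le) ha)]
    calc L / c' * H n * Pg Lu = (L * H n * Pg Lu) / c' := by ring
      _ ≤ (Lu * H n * ((n : ℝ) * Pg (L / n))) / c' := by gcongr
      _ = Lu / c' * H n * ((n : ℝ) * Pg (L / n)) := by ring
  refine ⟨key, ?_⟩
  -- asymptotic part
  have hq := hPgLu
  set C : ℝ := (Lu / (c' * Pg Lu)) * (2 + |Real.log (1 / Lu + 1)|) with hC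
  rw [isBigO_iff]
  refine ⟨C, ?_⟩
  rw [Filter.eventually_atTop]
  refine ⟨max (Real.exp 1) (2 * Lu), fun L hL => ?_⟩
  have hLe : Real.exp 1 ≤ L := le_trans (le_max_left _ _) hL
  have hL2 : 2 * Lu ≤ L := le_trans (le_max_right _ _) hL
  have hL1 : 1 ≤ L := le_trans (by nlinarith [Real.add_one_le_exp 1]) hLe
  have hL0 : 0 < L := lt_of_lt_of_le one_pos hL1
  have hlogL : 1 ≤ Real.log L := (Real.le_log_iff_exp_le hL0).mpr hLe
  have hTnn : ∀ m : ℕ, 0 ≤ Tsec L m := by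
    intro m
    rw [hT]
    have := hPgpos (L / ((m : ℝ) + 1))
    have := hHnn (m + 1)
    positivity
  have hbdd : BddBelow (Set.range fun m : ℕ+ => Tsec L (m : ℕ)) :=
    ⟨0, by rintro x ⟨m, rfl⟩; exact hTnn m⟩
  set n : ℕ := ⌈L / Lu⌉₊ with hn
  have hn2 : 2 ≤ n := by
    rw [hn]
    have : (1 : ℝ) < L / Lu := by rw [lt_div_iff₀ hLu]; linarith
    exact Nat.lt_ceil.mpr (by exact_mod_cast this)
  have hm0 : (n - 1) + 1 = n := Nat.succ_pred_eq_of_pos (lt_of_lt_of_le two_pos hn2)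
  have hm0pos : 0 < n - 1 := Nat.sub_pos_of_lt (lt_of_lt_of_le one_lt_two hn2)
  have hinf_le : (⨅ m : ℕ+, Tsec L (m : ℕ)) ≤ Tsec L (n - 1) :=
    ciInf_le hbdd (⟨n - 1, hm0pos⟩ : ℕ+)
  have hinf_nn : 0 ≤ ⨅ m : ℕ+, Tsec L (m : ℕ) :=
    le_ciInf fun m => hTnn m
  have hkey := key L hL0 (n - 1) (by rw [hm0])
  -- bound H n
  have hnlt : (n : ℝ) ≤ L / Lu + 1 := le_of_lt (Nat.ceil_lt_add_one (by positivity))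
  have hHbound : H n ≤ (2 + |Real.log (1 / Lu + 1)|) * Real.log L := by
    rw [hHharm]
    have h1 : (harmonic n : ℝ) ≤ 1 + Real.log n := harmonic_le_one_add_log n
    have hnRpos : (0 : ℝ) < n := Nat.cast_pos.mpr (lt_of_lt_of_le two_pos hn2)
    have h2 : Real.log n ≤ Real.log (L * (1 / Lu + 1)) := by
      apply Real.log_le_log hnRpos
      calc (n : ℝ) ≤ L / Lu + 1 := hnlt
        _ ≤ L * (1 / Lu) + L * 1 := by rw [div_eq_mul_one_div]; linarith
        _ = L * (1 / Lu + 1) := by ring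
    have h3 : Real.log (L * (1 / Lu + 1)) = Real.log L + Real.log (1 / Lu + 1) := by
      rw [Real.log_mul (by positivity) (by positivity)]
    have h4 : Real.log (1 / Lu + 1) ≤ |Real.log (1 / Lu + 1)| := le_abs_self _
    have h5 : |Real.log (1 / Lu + 1)| ≤ |Real.log (1 / Lu + 1)| * Real.log L :=
      le_mul_of_one_le_right (abs_nonneg _) hlogL
    nlinarith [abs_nonneg (Real.log (1 / Lu + 1))]
  have hfinal : Tsec L (n - 1) ≤ C * Real.log L := by
    refine hkey.trans ?_
    rw [hC]
    have : (Lu / c') * H n / Pg Lu = (Lu / (c' * Pg Lu)) * H n := by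
      field_simp
    rw [this]
    have hpos : 0 < Lu / (c' * Pg Lu) := by positivity
    calc (Lu / (c' * Pg Lu)) * H n
        ≤ (Lu / (c' * Pg Lu)) * ((2 + |Real.log (1 / Lu + 1)|) * Real.log L) := by
          exact mul_le_mul_of_nonneg_left hHbound hpos.le
      _ = (Lu / (c' * Pg Lu)) * (2 + |Real.log (1 / Lu + 1)|) * Real.log L := by ring
  rw [Real.norm_eq_abs, Real.norm_eq_abs, abs_of_nonneg hinf_nn,
    abs_of_nonneg (by linarith : (0:ℝ) ≤ Real.log L)]
  exact le_trans hinf_le hfinal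
end
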